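/- (Berger's inequality) Let R be an algebraic curvature tensor on ℝⁿ such that δ ≤ R(X,Y,X,Y) ≤ 1 for all orthonormal pairs X, Y. Then for every orthonormal four-frame {e₁,e₂,e₃,e₄}: |R(e₁,e₂,e₃,e₄)| ≤ (2/3)(1 − δ). -/

import Mathlib

/-!
Write `K±± = R(u, v, u, v)` for `u = e₁ ± e₃`, `v = e₂ ± e₄`; since `u/√2, v/√2` are orthonormal,
each `K±±` lies in `[4δ, 4]`. Expanding multilinearly and using the pair symmetry gives
`K₊₊ - K₊₋ - K₋₊ + K₋₋ = 8 (R₁₂₃₄ - R₁₄₂₃)`, hence `|R₁₂₃₄ - R₁₄₂₃| ≤ 1 - δ`. Applied to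
`(e₁, e₂, e₄, e₃)` this also gives `|R₁₂₃₄ - R₁₃₄₂| ≤ 1 - δ`, and the first Bianchi identity
`R₁₂₃₄ + R₁₃₄₂ + R₁₄₂₃ = 0` turns the two bounds into `3 |R₁₂₃₄| ≤ 2 (1 - δ)`.
-/

noncomputable section
open scoped BigOperators

def dotp {n : ℕ} (X Y : Fin n → ℝ) : ℝ := ∑ i, X i * Y i

def ON4 {n : ℕ} (e₁ e₂ e₃ e₄ : Fin n → ℝ) : Prop :=
  dotp e₁ e₁ = 1 ∧ dotp e₂ e₂ = 1 ∧ dotp e₃ e₃ = 1 ∧ dotp e₄ e₄ = 1 ∧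
  dotp e₁ e₂ = 0 ∧ dotp e₁ e₃ = 0 ∧ dotp e₁ e₄ = 0 ∧
  dotp e₂ e₃ = 0 ∧ dotp e₂ e₄ = 0 ∧ dotp e₃ e₄ = 0

open Function

theorem update_vecFour_zero {α : Type*} (a b c d x : α) :
    update ![a, b, c, d] 0 x = ![x, b, c, d] := by
  funext j; fin_cases j <;> rfl

theorem update_vecFour_one {α : Type*} (a b c d x : α) :
    update ![a, b, c, d] 1 x = ![a, x, c, d] := by
  funext j; fin_cases j <;> rfl

theorem update_vecFour_two {α : Type*} (a b c d x : α) :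
    update ![a, b, c, d] 2 x = ![a, b, x, d] := by
  funext j; fin_cases j <;> rfl

theorem update_vecFour_three {α : Type*} (a b c d x : α) :
    update ![a, b, c, d] 3 x = ![a, b, c, x] := by
  funext j; fin_cases j <;> rfl

namespace MultilinearMap

variable {𝕜 M : Type*} [CommRing 𝕜] [AddCommGroup M] [Module 𝕜 M]
variable (R : MultilinearMap 𝕜 (fun _ : Fin 4 => M) 𝕜) (x y a b c : M)

theorem map_vecFour_add_zero : R ![x + y, a, b, c] = R ![x, a, b, c] + R ![y, a, b, c] := by
  simpa only [update_vecFour_zero] using R.map_update_add ![x, a, b, c] 0 x y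

theorem map_vecFour_add_one : R ![a, x + y, b, c] = R ![a, x, b, c] + R ![a, y, b, c] := by
  simpa only [update_vecFour_one] using R.map_update_add ![a, x, b, c] 1 x y

theorem map_vecFour_add_two : R ![a, b, x + y, c] = R ![a, b, x, c] + R ![a, b, y, c] := by
  simpa only [update_vecFour_two] using R.map_update_add ![a, b, x, c] 2 x y

theorem map_vecFour_add_three : R ![a, b, c, x + y] = R ![a, b, c, x] + R ![a, b, c, y] := by
  simpa only [update_vecFour_three] using R.map_update_add ![a, b, c, x] 3 x y

theorem map_vecFour_sub_zero : R ![x - y, a, b, c] = R ![x, a, b, c] - R ![y, a, b, c] := by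
  simpa only [update_vecFour_zero] using R.map_update_sub ![x, a, b, c] 0 x y

theorem map_vecFour_sub_one : R ![a, x - y, b, c] = R ![a, x, b, c] - R ![a, y, b, c] := by
  simpa only [update_vecFour_one] using R.map_update_sub ![a, x, b, c] 1 x y

theorem map_vecFour_sub_two : R ![a, b, x - y, c] = R ![a, b, x, c] - R ![a, b, y, c] := by
  simpa only [update_vecFour_two] using R.map_update_sub ![a, b, x, c] 2 x y

theorem map_vecFour_sub_three : R ![a, b, c, x - y] = R ![a, b, c, x] - R ![a, b, c, y] := by
  simpa only [update_vecFour_three] using R.map_update_sub ![a, b, c, x] 3 x y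

theorem map_vecFour_smul (t : 𝕜) : R ![t • x, t • y, t • x, t • y] = t ^ 4 * R ![x, y, x, y] := by
  have h := R.map_smul_univ (fun _ => t) ![x, y, x, y]
  simp only [Finset.prod_const, Finset.card_univ, Fintype.card_fin, smul_eq_mul] at h
  rw [← h]
  congr 1
  funext j; fin_cases j <;> rfl

theorem polarization (z w : M) :
    R ![x + y, z + w, x + y, z + w] - R ![x + y, z - w, x + y, z - w]
      - R ![x - y, z + w, x - y, z + w] + R ![x - y, z - w, x - y, z - w]
      = 4 * (R ![x, z, y, w] + R ![x, w, y, z] + R ![y, z, x, w] + R ![y, w, x, z]) := by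
  simp only [map_vecFour_add_zero, map_vecFour_add_one, map_vecFour_add_two,
    map_vecFour_add_three, map_vecFour_sub_zero, map_vecFour_sub_one, map_vecFour_sub_two,
    map_vecFour_sub_three]
  ring

theorem map_vecFour_swap_last (hanti : ∀ X Y Z W, R ![X, Y, Z, W] = -R ![Y, X, Z, W])
    (hpair : ∀ X Y Z W, R ![X, Y, Z, W] = R ![Z, W, X, Y]) (X Y Z W : M) :
    R ![X, Y, Z, W] = -R ![X, Y, W, Z] := by
  rw [hpair, hanti, hpair]

theorem bianchi_cyclic (hanti : ∀ X Y Z W, R ![X, Y, Z, W] = -R ![Y, X, Z, W])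
    (hpair : ∀ X Y Z W, R ![X, Y, Z, W] = R ![Z, W, X, Y])
    (hbianchi : ∀ X Y Z W, R ![X, Y, Z, W] + R ![Y, Z, X, W] + R ![Z, X, Y, W] = 0)
    (X Y Z W : M) : R ![X, Y, Z, W] + R ![X, Z, W, Y] + R ![X, W, Y, Z] = 0 := by
  have h := hbianchi X Y Z W
  rw [hpair Y Z X W, hanti Z X Y W, map_vecFour_swap_last R hanti hpair X Z Y W, neg_neg] at h
  linear_combination h

end MultilinearMap

section Curvature

variable {n : ℕ}

theorem dotp_eq_dotProduct (X Y : Fin n → ℝ) : dotp X Y = X ⬝ᵥ Y := rfl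

theorem dotp_comm (X Y : Fin n → ℝ) : dotp X Y = dotp Y X := dotProduct_comm X Y

theorem ON4.swap_last {e₁ e₂ e₃ e₄ : Fin n → ℝ} (h : ON4 e₁ e₂ e₃ e₄) : ON4 e₁ e₂ e₄ e₃ := by
  obtain ⟨h11, h22, h33, h44, h12, h13, h14, h23, h24, h34⟩ := h
  exact ⟨h11, h22, h44, h33, h12, h14, h13, h24, h23, by rwa [dotp_comm]⟩

theorem dotp_add_smul_add_smul (x y z w : Fin n → ℝ) (s t : ℝ) :
    dotp (x + s • y) (z + t • w) = dotp x z + t * dotp x w + s * dotp y z + s * t * dotp y w := by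
  simp only [dotp_eq_dotProduct, add_dotProduct, dotProduct_add, smul_dotProduct,
    dotProduct_smul, smul_eq_mul]
  ring

theorem ON4.dotp_add_smul {e₁ e₂ e₃ e₄ : Fin n → ℝ} (h : ON4 e₁ e₂ e₃ e₄) {s t : ℝ}
    (hs : s ^ 2 = 1) (ht : t ^ 2 = 1) :
    dotp (e₁ + s • e₃) (e₁ + s • e₃) = 2 ∧ dotp (e₂ + t • e₄) (e₂ + t • e₄) = 2 ∧
      dotp (e₁ + s • e₃) (e₂ + t • e₄) = 0 := by
  obtain ⟨h11, h22, h33, h44, h12, h13, h14, h23, h24, h34⟩ := h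
  have h31 : dotp e₃ e₁ = 0 := by rwa [dotp_comm]
  have h32 : dotp e₃ e₂ = 0 := by rwa [dotp_comm]
  have h42 : dotp e₄ e₂ = 0 := by rwa [dotp_comm]
  simp only [dotp_add_smul_add_smul, h11, h22, h33, h44, h12, h13, h14, h24, h31, h32, h34, h42]
  exact ⟨by linear_combination hs, by linear_combination ht, by ring⟩

variable {δ : ℝ} (R : MultilinearMap ℝ (fun _ : Fin 4 => (Fin n → ℝ)) ℝ)

theorem sectional_bound_of_dotp_eq
    (hsec : ∀ X Y : Fin n → ℝ, dotp X X = 1 → dotp Y Y = 1 → dotp X Y = 0 →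
      δ ≤ R ![X, Y, X, Y] ∧ R ![X, Y, X, Y] ≤ 1)
    {ρ : ℝ} (hρ : 0 < ρ) {u v : Fin n → ℝ} (hu : dotp u u = ρ) (hv : dotp v v = ρ)
    (huv : dotp u v = 0) : ρ ^ 2 * δ ≤ R ![u, v, u, v] ∧ R ![u, v, u, v] ≤ ρ ^ 2 := by
  set c := (√ρ)⁻¹
  have hc : c ^ 2 * ρ = 1 := by
    rw [inv_pow, Real.sq_sqrt hρ.le, inv_mul_cancel₀ hρ.ne']
  have hunit : ∀ {x : Fin n → ℝ}, dotp x x = ρ → dotp (c • x) (c • x) = 1 := fun hx => by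
    rw [dotp_eq_dotProduct, smul_dotProduct, dotProduct_smul, ← dotp_eq_dotProduct, hx,
      smul_eq_mul, smul_eq_mul, ← mul_assoc, ← sq, hc]
  have horth : dotp (c • u) (c • v) = 0 := by
    rw [dotp_eq_dotProduct, smul_dotProduct, dotProduct_smul, ← dotp_eq_dotProduct, huv,
      smul_zero, smul_zero]
  obtain ⟨hlow, hup⟩ := hsec _ _ (hunit hu) (hunit hv) horth
  rw [R.map_vecFour_smul] at hlow hup
  have hscale : R ![u, v, u, v] = ρ ^ 2 * (c ^ 4 * R ![u, v, u, v]) := by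
    linear_combination (-(c ^ 2 * ρ + 1) * R ![u, v, u, v]) * hc
  have hρ2 : 0 ≤ ρ ^ 2 := by positivity
  rw [hscale]
  exact ⟨mul_le_mul_of_nonneg_left hlow hρ2, mul_le_of_le_one_right hρ2 hup⟩

theorem abs_sub_le_of_ON4 (hanti : ∀ X Y Z W, R ![X, Y, Z, W] = -R ![Y, X, Z, W])
    (hpair : ∀ X Y Z W, R ![X, Y, Z, W] = R ![Z, W, X, Y])
    (hsec : ∀ X Y : Fin n → ℝ, dotp X X = 1 → dotp Y Y = 1 → dotp X Y = 0 →
      δ ≤ R ![X, Y, X, Y] ∧ R ![X, Y, X, Y] ≤ 1)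
    {e₁ e₂ e₃ e₄ : Fin n → ℝ} (h : ON4 e₁ e₂ e₃ e₄) :
    |R ![e₁, e₂, e₃, e₄] - R ![e₁, e₄, e₂, e₃]| ≤ 1 - δ := by
  have hK : ∀ s t : ℝ, s ^ 2 = 1 → t ^ 2 = 1 →
      4 * δ ≤ R ![e₁ + s • e₃, e₂ + t • e₄, e₁ + s • e₃, e₂ + t • e₄] ∧
        R ![e₁ + s • e₃, e₂ + t • e₄, e₁ + s • e₃, e₂ + t • e₄] ≤ 4 := fun s t hs ht => by
    obtain ⟨hu, hv, huv⟩ := h.dotp_add_smul hs ht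
    simpa only [show (2 : ℝ) ^ 2 = 4 by norm_num] using
      sectional_bound_of_dotp_eq R hsec two_pos hu hv huv
  have hpp := hK 1 1 (one_pow 2) (one_pow 2)
  have hpm := hK 1 (-1) (one_pow 2) neg_one_sq
  have hmp := hK (-1) 1 neg_one_sq (one_pow 2)
  have hmm := hK (-1) (-1) neg_one_sq neg_one_sq
  simp only [one_smul, neg_one_smul, ← sub_eq_add_neg] at hpp hpm hmp hmm
  have hpol := R.polarization e₁ e₃ e₂ e₄
  -- the four mixed terms are `R₁₂₃₄, -R₁₄₂₃, -R₁₄₂₃, R₁₂₃₄`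
  rw [R.map_vecFour_swap_last hanti hpair e₁ e₄ e₃, hpair e₃ e₂, hpair e₃ e₄,
    R.map_vecFour_swap_last hanti hpair e₁ e₄ e₃] at hpol
  rw [abs_le]
  constructor <;> linarith

end Curvature

theorem abs_le_of_add_add_eq_zero {α : Type*} [Field α] [LinearOrder α] [IsStrictOrderedRing α]
    {a b c ε : α} (h : a + b + c = 0) (hab : |a - b| ≤ ε) (hac : |a - c| ≤ ε) :
    |a| ≤ 2 / 3 * ε := by
  rw [abs_le] at *
  constructor <;> linarith [hab.1, hab.2, hac.1, hac.2]

theorem berger_inequality {n : ℕ} (δ : ℝ)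
    (R : MultilinearMap ℝ (fun _ : Fin 4 => (Fin n → ℝ)) ℝ)
    (hanti : ∀ X Y Z W, R ![X, Y, Z, W] = - R ![Y, X, Z, W])
    (hpair : ∀ X Y Z W, R ![X, Y, Z, W] = R ![Z, W, X, Y])
    (hbianchi : ∀ X Y Z W,
      R ![X, Y, Z, W] + R ![Y, Z, X, W] + R ![Z, X, Y, W] = 0)
    (hsec : ∀ X Y : Fin n → ℝ, dotp X X = 1 → dotp Y Y = 1 → dotp X Y = 0 →
      δ ≤ R ![X, Y, X, Y] ∧ R ![X, Y, X, Y] ≤ 1) :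
    ∀ e₁ e₂ e₃ e₄ : Fin n → ℝ, ON4 e₁ e₂ e₃ e₄ →
      |R ![e₁, e₂, e₃, e₄]| ≤ (2 / 3) * (1 - δ) := by
  intro e₁ e₂ e₃ e₄ h
  have hac := abs_sub_le_of_ON4 R hanti hpair hsec h
  have hab := abs_sub_le_of_ON4 R hanti hpair hsec h.swap_last
  rw [R.map_vecFour_swap_last hanti hpair e₁ e₂, R.map_vecFour_swap_last hanti hpair e₁ e₃,
    neg_sub_neg, abs_sub_comm] at hab
  exact abs_le_of_add_add_eq_zero (R.bianchi_cyclic hanti hpair hbianchi e₁ e₂ e₃ e₄) hab hac
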